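/- For n large, the proportion p_n = |R_n^{(H)}|/n! of ordered ranked trees of size n whose subtree H(t) is maximally probable satisfies 4/n^2 ≤ p_n ≤ 2(n^2 − 4n + 46)/(n(n−2)(n−4)), given that |R_n^{(H)}| = c_n + 3·2^{n−2} with c_n = Σ_{i=4}^{n} (i−1)!·α_{i−1}·2^{n−i}, c'_n = (n−1)!·α_{n−1}, c''_n = 2(n−1)!, c_n ≥ c'_n, and |R_n^{(H)}| − c'_n ≤ c''_n. -/

import Mathlib

noncomputable def alpha (n : ℕ) : ℝ :=
  ∑ q ∈ Finset.Icc 1 (n - 1), (2 : ℝ) ^ (min q (n - q)) / (Nat.choose n q : ℝ)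

/-- `p n = |R_n^{(H)}| / n!` where
`|R_n^{(H)}| = ∑_{i=4}^n (i-1)!·α_{i-1}·2^{n-i} + 3·2^{n-2}`. -/
noncomputable def p (n : ℕ) : ℝ :=
  (∑ i ∈ Finset.Icc 4 n, ((i - 1).factorial : ℝ) * alpha (i - 1) * 2 ^ (n - i) +
      3 * 2 ^ (n - 2)) / (n.factorial : ℝ)

/-!
Both bounds are far from tight: in fact `n * p n → 0`. Splitting off the top term of the sum
gives the recursion `c (n + 1) = 2 * c n + n! * α n`, so `n * p n ≤ α (n - 1) + O(1 / n) + o(1)`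
as soon as `α` is bounded. Folding each term of `α m` onto `q ≤ m / 2` and using
`4 ^ k ≤ 2 k C(2k, k) ≤ 2 k C(m, k)` dominates it by the summable `2 k / 2 ^ k`, while each fixed
term is `O(1 / m)`; Tannery's theorem then gives `α m → 0`. The lower bound comes from the
terms `q = 1` and `q = m - 1` of `α (n - 1)` alone.
-/

open Filter Topology Nat

lemma alpha_nonneg (m : ℕ) : 0 ≤ alpha m :=
  Finset.sum_nonneg fun _ _ => by positivity

lemma four_div_le_alpha {m : ℕ} (hm : 3 ≤ m) : 4 / (m : ℝ) ≤ alpha m := by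
  have hsub : ({1, m - 1} : Finset ℕ) ⊆ Finset.Icc 1 (m - 1) := by
    intro x hx
    simp only [Finset.mem_insert, Finset.mem_singleton] at hx
    simp only [Finset.mem_Icc]
    omega
  have hpair : ∑ q ∈ ({1, m - 1} : Finset ℕ), (2 : ℝ) ^ (min q (m - q)) / (m.choose q : ℝ)
      = 4 / m := by
    rw [Finset.sum_pair (by omega), Nat.choose_symm (by omega), Nat.choose_one_right,
      show min 1 (m - 1) = 1 by omega, show min (m - 1) (m - (m - 1)) = 1 by omega]
    ring
  exact hpair ▸ Finset.sum_le_sum_of_subset_of_nonneg hsub fun _ _ _ => by positivity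

noncomputable def alphaHalfTerm (m k : ℕ) : ℝ :=
  if 1 ≤ k ∧ 2 * k ≤ m then 2 ^ k / m.choose k else 0

lemma alphaHalfTerm_nonneg (m k : ℕ) : 0 ≤ alphaHalfTerm m k := by
  unfold alphaHalfTerm; split_ifs <;> positivity

lemma alphaHalfTerm_le (m k : ℕ) : alphaHalfTerm m k ≤ 2 * ((k : ℝ) * (1 / 2) ^ k) := by
  unfold alphaHalfTerm
  split_ifs with hk
  · have h4 : (4 : ℝ) ^ k ≤ 2 * k * m.choose k := by
      exact_mod_cast (Nat.four_pow_le_two_mul_self_mul_centralBinom k hk.1).trans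
        (Nat.mul_le_mul_left _ (Nat.choose_le_choose k hk.2))
    have hc : (0 : ℝ) < m.choose k := by exact_mod_cast Nat.choose_pos (by omega)
    rw [div_le_iff₀ hc]
    calc (2 : ℝ) ^ k = 4 ^ k * (1 / 2) ^ k := by rw [← mul_pow]; norm_num
      _ ≤ 2 * k * m.choose k * (1 / 2) ^ k := by gcongr
      _ = 2 * (k * (1 / 2) ^ k) * m.choose k := by ring
  · positivity

lemma summable_two_mul_coe_mul_half_pow : Summable fun k : ℕ => 2 * ((k : ℝ) * (1 / 2) ^ k) :=
  (hasSum_coe_mul_geometric_of_norm_lt_one (by norm_num : ‖(1 / 2 : ℝ)‖ < 1)).summable.mul_left 2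

lemma le_mul_choose {m k : ℕ} (hk : 1 ≤ k) (hkm : k ≤ m) : m ≤ k * m.choose k := by
  obtain ⟨j, rfl⟩ := Nat.exists_eq_add_of_le' hk
  obtain ⟨n, rfl⟩ := Nat.exists_eq_add_of_le' (hk.trans hkm)
  have := Nat.add_one_mul_choose_eq n j
  have : 1 ≤ n.choose j := Nat.choose_pos (by omega)
  nlinarith

lemma alphaHalfTerm_le_div (m k : ℕ) : alphaHalfTerm m k ≤ 2 ^ k * k / m := by
  unfold alphaHalfTerm
  split_ifs with hk
  · have hc : (0 : ℝ) < m.choose k := by exact_mod_cast Nat.choose_pos (by omega)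
    have hm : (0 : ℝ) < m := by exact_mod_cast (show 0 < m by omega)
    have hmk : (m : ℝ) ≤ k * m.choose k := by exact_mod_cast le_mul_choose hk.1 (by omega)
    rw [div_le_div_iff₀ hc hm]
    calc (2 : ℝ) ^ k * m ≤ 2 ^ k * (k * m.choose k) := by gcongr
      _ = 2 ^ k * k * m.choose k := by ring
  · positivity

lemma tendsto_alphaHalfTerm (k : ℕ) : Tendsto (fun m => alphaHalfTerm m k) atTop (𝓝 0) :=
  tendsto_of_tendsto_of_tendsto_of_le_of_le tendsto_const_nhds
    (tendsto_const_div_atTop_nhds_zero_nat _) (fun m => alphaHalfTerm_nonneg m k)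
    (fun m => alphaHalfTerm_le_div m k)

lemma alpha_le_two_mul_tsum (m : ℕ) : alpha m ≤ 2 * ∑' k, alphaHalfTerm m k := by
  have hfold : ∀ q ∈ Finset.Icc 1 (m - 1), (2 : ℝ) ^ (min q (m - q)) / (m.choose q : ℝ)
      ≤ alphaHalfTerm m q + alphaHalfTerm m (m - q) := by
    intro q hq
    rw [Finset.mem_Icc] at hq
    rcases le_total q (m - q) with h | h
    · have : alphaHalfTerm m q = (2 : ℝ) ^ (min q (m - q)) / (m.choose q : ℝ) := by
        rw [alphaHalfTerm, if_pos ⟨hq.1, by omega⟩, min_eq_left h]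
      linarith [alphaHalfTerm_nonneg m (m - q)]
    · have : alphaHalfTerm m (m - q) = (2 : ℝ) ^ (min q (m - q)) / (m.choose q : ℝ) := by
        rw [alphaHalfTerm, if_pos ⟨by omega, by omega⟩, min_eq_right h,
          Nat.choose_symm (by omega)]
      linarith [alphaHalfTerm_nonneg m q]
  have hreflect : ∑ q ∈ Finset.Icc 1 (m - 1), alphaHalfTerm m (m - q)
      = ∑ q ∈ Finset.Icc 1 (m - 1), alphaHalfTerm m q :=
    Finset.sum_nbij' (fun q => m - q) (fun q => m - q) (by simp; omega) (by simp; omega)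
      (by simp; omega) (by simp; omega) (fun _ _ => rfl)
  have hsummable : Summable (alphaHalfTerm m) :=
    summable_two_mul_coe_mul_half_pow.of_nonneg_of_le (alphaHalfTerm_nonneg m)
      (alphaHalfTerm_le m)
  calc alpha m ≤ ∑ q ∈ Finset.Icc 1 (m - 1), (alphaHalfTerm m q + alphaHalfTerm m (m - q)) :=
        Finset.sum_le_sum hfold
    _ = 2 * ∑ q ∈ Finset.Icc 1 (m - 1), alphaHalfTerm m q := by
        rw [Finset.sum_add_distrib, hreflect]; ring
    _ ≤ 2 * ∑' k, alphaHalfTerm m k := by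
        gcongr
        exact hsummable.sum_le_tsum _ fun k _ => alphaHalfTerm_nonneg m k

lemma tendsto_alpha_atTop : Tendsto alpha atTop (𝓝 0) := by
  have htannery : Tendsto (fun m => ∑' k, alphaHalfTerm m k) atTop (𝓝 0) := by
    simpa using tendsto_tsum_of_dominated_convergence summable_two_mul_coe_mul_half_pow
      tendsto_alphaHalfTerm (Eventually.of_forall fun m k => by
        rw [Real.norm_of_nonneg (alphaHalfTerm_nonneg m k)]; exact alphaHalfTerm_le m k)
  exact tendsto_of_tendsto_of_tendsto_of_le_of_le tendsto_const_nhds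
    (by simpa using htannery.const_mul 2) alpha_nonneg alpha_le_two_mul_tsum

/-- The sum `c_n` in the numerator of `p n`. -/
noncomputable def c (n : ℕ) : ℝ :=
  ∑ i ∈ Finset.Icc 4 n, ((i - 1)! : ℝ) * alpha (i - 1) * 2 ^ (n - i)

lemma c_nonneg (n : ℕ) : 0 ≤ c n :=
  Finset.sum_nonneg fun i _ => by have := alpha_nonneg (i - 1); positivity

lemma c_succ {n : ℕ} (hn : 3 ≤ n) : c (n + 1) = 2 * c n + n ! * alpha n := by
  rw [c, Finset.sum_Icc_succ_top (by omega), c, Finset.mul_sum]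
  congr 1
  · refine Finset.sum_congr rfl fun i hi => ?_
    rw [Finset.mem_Icc] at hi
    rw [show n + 1 - i = n - i + 1 by omega, pow_succ]
    ring
  · simp

lemma cast_factorial_eq_mul {n : ℕ} (hn : n ≠ 0) : (n ! : ℝ) = n * (n - 1)! := by
  exact_mod_cast (Nat.mul_factorial_pred hn).symm

lemma c_le {A : ℝ} (hA : ∀ m, alpha m ≤ A) {n : ℕ} (hn : 4 ≤ n) : c n ≤ 2 * A * (n - 1)! := by
  have hA0 : 0 ≤ A := (alpha_nonneg 0).trans (hA 0)
  induction n, hn using Nat.le_induction with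
  | base =>
    rw [c, Finset.Icc_self, Finset.sum_singleton]
    norm_num [Nat.factorial]
    linarith [hA 3]
  | succ n hn ih =>
    have hn4 : (4 : ℝ) ≤ n := by exact_mod_cast hn
    rw [c_succ (by omega), Nat.add_sub_cancel]
    calc 2 * c n + n ! * alpha n ≤ 2 * (2 * A * (n - 1)!) + n ! * A := by
          gcongr; exact hA n
      _ ≤ 2 * A * n ! := by
          rw [cast_factorial_eq_mul (n := n) (by omega)]
          nlinarith [(by positivity : 0 ≤ A * ((n - 1)! : ℝ))]

lemma p_nonneg (n : ℕ) : 0 ≤ p n :=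
  div_nonneg (add_nonneg (c_nonneg n) (by positivity)) (by positivity)

lemma succ_mul_p_succ {n : ℕ} (hn : 3 ≤ n) :
    (n + 1) * p (n + 1) = alpha n + (2 * c n + 3 * 2 ^ (n - 1)) / n ! := by
  have hfac : ((n + 1)! : ℝ) = (n + 1) * n ! := by push_cast [Nat.factorial_succ]; ring
  rw [p, ← c, c_succ hn, hfac, show n + 1 - 2 = n - 1 by omega]
  field_simp
  ring

lemma succ_mul_p_succ_le {A : ℝ} (hA : ∀ m, alpha m ≤ A) {n : ℕ} (hn : 4 ≤ n) :
    (n + 1) * p (n + 1) ≤ alpha n + 4 * A / n + 3 * (2 ^ n / n !) := by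
  have hc : 2 * c n / n ! ≤ 4 * A / n := by
    rw [cast_factorial_eq_mul (by omega), div_le_div_iff₀ (by positivity) (by positivity)]
    nlinarith [c_le hA hn, (by positivity : (0 : ℝ) < n * (n - 1)!)]
  have hpow : 3 * (2 : ℝ) ^ (n - 1) / n ! ≤ 3 * (2 ^ n / n !) := by
    rw [← mul_div_assoc]
    gcongr
    exacts [by norm_num, by omega]
  rw [succ_mul_p_succ (by omega), add_div]
  linarith

lemma tendsto_mul_p : Tendsto (fun n : ℕ => n * p n) atTop (𝓝 0) := by
  obtain ⟨A, hA⟩ := tendsto_alpha_atTop.bddAbove_range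
  have hA' : ∀ m, alpha m ≤ A := fun m => hA (Set.mem_range_self m)
  rw [← tendsto_add_atTop_iff_nat 1]
  have hbound :
      Tendsto (fun n : ℕ => alpha n + 4 * A / n + 3 * ((2 : ℝ) ^ n / n !)) atTop (𝓝 0) := by
    simpa using (tendsto_alpha_atTop.add (tendsto_const_div_atTop_nhds_zero_nat (4 * A))).add
      ((FloorSemiring.tendsto_pow_div_factorial_atTop (2 : ℝ)).const_mul 3)
  refine tendsto_of_tendsto_of_tendsto_of_le_of_le' tendsto_const_nhds hbound
    (Eventually.of_forall fun n => mul_nonneg (by positivity) (p_nonneg _)) ?_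
  filter_upwards [eventually_ge_atTop 4] with n hn
  push_cast
  exact succ_mul_p_succ_le hA' hn

lemma four_div_sq_le_p {n : ℕ} (hn : 4 ≤ n) : 4 / (n : ℝ) ^ 2 ≤ p n := by
  obtain ⟨m, rfl⟩ := Nat.exists_eq_add_of_le' (by omega : 1 ≤ n)
  have hm : (3 : ℝ) ≤ m := by exact_mod_cast (by omega : 3 ≤ m)
  have halpha := four_div_le_alpha (by omega : 3 ≤ m)
  have hmain : alpha m ≤ (m + 1) * p (m + 1) := by
    rw [succ_mul_p_succ (by omega)]
    have := c_nonneg m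
    linarith [show 0 ≤ (2 * c m + 3 * 2 ^ (m - 1)) / (m ! : ℝ) by positivity]
  push_cast
  rw [div_le_iff₀ (by positivity)]
  rw [div_le_iff₀ (by positivity)] at halpha
  nlinarith [p_nonneg (m + 1)]

theorem p_bounds :
    ∃ N : ℕ, ∀ n : ℕ, N ≤ n →
      4 / (n : ℝ) ^ 2 ≤ p n ∧
        p n ≤ 2 * ((n : ℝ) ^ 2 - 4 * n + 46) / ((n : ℝ) * ((n : ℝ) - 2) * ((n : ℝ) - 4)) := by
  obtain ⟨N, hN⟩ := eventually_atTop.1 (tendsto_mul_p.eventually (eventually_le_nhds two_pos))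
  refine ⟨max N 5, fun n hn => ⟨four_div_sq_le_p (by omega), ?_⟩⟩
  have hn5 : (5 : ℝ) ≤ n := by exact_mod_cast (le_max_right N 5).trans hn
  calc p n ≤ 2 / n := by
        rw [le_div_iff₀ (by positivity)]; linarith [hN n (le_of_max_le_left hn)]
    _ ≤ _ := by
        have hden : (0 : ℝ) < n * (n - 2) * (n - 4) := by
          have : (0 : ℝ) < n - 4 := by linarith
          have : (0 : ℝ) < n - 2 := by linarith
          positivity
        rw [div_le_div_iff₀ (by positivity) hden]
        nlinarith
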